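/- Let d, m ≥ 1, and for π ∈ NC*(d,m) let π|_{A_i} denote its restriction to the label class A_i (a non-crossing partition of a 2m-element set, identified with [2m]), and let Φ denote the quotient map from non-crossing even partitions of [2m] to partitions of [m] identifying 2k−1 and 2k. Then for any π ∈ NC*(d,m) and any 1 ≤ i < j ≤ d, the partition Φ(π|_{A_j}) is finer than Φ(π|_{A_i}); that is, the map P(π) = (Φ(π|_{A₁}),...,Φ(π|_{A_d})) takes values in the set of non-decreasing (in refinement order) chains of non-crossing partitions of [m]. -/

import Mathlib

open Classical

/-- `i` and `j` lie in the same block of the partition `P`. -/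
def SameBlock {N : ℕ} (P : Finpartition (Finset.univ : Finset (Fin N))) (i j : Fin N) : Prop :=
  ∃ b ∈ P.parts, i ∈ b ∧ j ∈ b

/-- A partition of `[N]` is non-crossing if for `i < j < k < l`, `i ∼ k` and `j ∼ l`
imply `i ∼ j`. -/
def IsNonCrossing {N : ℕ} (P : Finpartition (Finset.univ : Finset (Fin N))) : Prop :=
  ∀ i j k l : Fin N, i < j → j < k → k < l →
    SameBlock P i k → SameBlock P j l → SameBlock P i j

/-- The (0-based) label of the 0-indexed element `j` of `[2dm]`: intervals `J_k` of size
`d`, labelled `0,...,d−1` on even-indexed (0-based) intervals and `d−1,...,0` on odd ones. -/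
def label (d j : ℕ) : ℕ :=
  if (j / d) % 2 = 0 then j % d else d - 1 - j % d

/-- The element of the label class `A_i` lying in the `t`-th interval `J_t` (0-based):
it is the `t`-th element of `A_i ≃ [2m]`. -/
def elemAt {d m : ℕ} (i : Fin d) (t : Fin (2 * m)) : Fin (2 * d * m) :=
  ⟨t.val * d + (if t.val % 2 = 0 then i.val else d - 1 - i.val), by
    have h1 : (if t.val % 2 = 0 then i.val else d - 1 - i.val) < d := by
      have := i.isLt; split <;> omega
    refine lt_of_lt_of_le (Nat.add_lt_add_left h1 _) ?_
    calc t.val * d + d = (t.val + 1) * d := by ring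
      _ ≤ (2 * m) * d := Nat.mul_le_mul_right d t.isLt
      _ = 2 * d * m := by ring⟩

/-- The relation `Φ(π|_{A_i})` on `[m]`: restrict `π` to the label class `A_i`
(identified with `[2m]` via `elemAt i`), then take the quotient identifying `2k−1`
and `2k` (0-indexed: positions `2k` and `2k+1`). -/
def PhiRestRel {d m : ℕ} (π : Finpartition (Finset.univ : Finset (Fin (2 * d * m))))
    (i : Fin d) : Fin m → Fin m → Prop :=
  Relation.EqvGen (fun k l =>
    ∃ s t : Fin (2 * m), (s.val = 2 * k.val ∨ s.val = 2 * k.val + 1) ∧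
      (t.val = 2 * l.val ∨ t.val = 2 * l.val + 1) ∧
      SameBlock π (elemAt i s) (elemAt i t))

/-!
On the label class `A_i`, `π` restricts to a non-crossing partition of `[2m]` with even blocks.
Let `k < l` and let a block of `π` join the elements of `A_j` in `J_{2k} ∪ J_{2k+1}` and in
`J_{2l} ∪ J_{2l+1}`. Because the labels run up on even intervals and down on odd ones, the elements
of `A_i` in `J_{2k+1}, …, J_{2l}` lie strictly between those two and, having another label, outside
their block. So non-crossing forces positions `2k+1, …, 2l` to be a union of blocks of `π|_{A_i}`.

In a non-crossing partition with even blocks, the convex hull of a block is a union of blocks and so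
has even size. Hence the block of the odd position `2k+1` ends at an even position `2u`. This puts
`k` and `u` in the same block of `Φ`, and we continue from `2u+1` until we reach `l`.
-/

open Finset

namespace SameBlock

variable {N : ℕ} {P : Finpartition (univ : Finset (Fin N))} {x y z : Fin N}

lemma refl (P : Finpartition (univ : Finset (Fin N))) (x : Fin N) : SameBlock P x x :=
  ⟨P.part x, P.part_mem.2 (mem_univ x), P.mem_part (mem_univ x), P.mem_part (mem_univ x)⟩

lemma symm : SameBlock P x y → SameBlock P y x
  | ⟨b, hb, hx, hy⟩ => ⟨b, hb, hy, hx⟩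

lemma mem_of_mem {b : Finset (Fin N)} (hb : b ∈ P.parts) (hx : x ∈ b) (hxy : SameBlock P x y) :
    y ∈ b := by
  obtain ⟨c, hc, hx', hy⟩ := hxy
  rwa [P.eq_of_mem_parts hb hc hx hx']

lemma trans (hxy : SameBlock P x y) (hyz : SameBlock P y z) : SameBlock P x z := by
  obtain ⟨b, hb, hx, hy⟩ := hxy
  exact ⟨b, hb, hx, hyz.mem_of_mem hb hy⟩

end SameBlock

section Saturated

variable {N : ℕ} {P : Finpartition (univ : Finset (Fin N))}

lemma sameBlock_iff_mem_part {x y : Fin N} : SameBlock P x y ↔ y ∈ P.part x := by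
  rw [Finpartition.mem_part_iff_exists]
  exact ⟨fun ⟨b, hb, hx, hy⟩ => ⟨b, hb, hy, hx⟩, fun ⟨b, hb, hy, hx⟩ => ⟨b, hb, hx, hy⟩⟩

def sameBlockSetoid (P : Finpartition (univ : Finset (Fin N))) : Setoid (Fin N) where
  r := SameBlock P
  iseqv := ⟨SameBlock.refl P, SameBlock.symm, SameBlock.trans⟩

def IsSaturated (P : Finpartition (univ : Finset (Fin N))) (S : Finset (Fin N)) : Prop :=
  ∀ x ∈ S, ∀ y, SameBlock P x y → y ∈ S

lemma IsSaturated.sdiff {S T : Finset (Fin N)} (hS : IsSaturated P S) (hT : IsSaturated P T) :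
    IsSaturated P (S \ T) := by
  intro x hx y hxy
  rw [mem_sdiff] at hx ⊢
  exact ⟨hS x hx.1 y hxy, fun hy => hx.2 (hT y hy x hxy.symm)⟩

lemma IsSaturated.even_card (heven : ∀ b ∈ P.parts, Even b.card) {S : Finset (Fin N)}
    (hS : IsSaturated P S) : Even S.card := by
  rw [← (P.restrict (subset_univ S)).sum_card_parts]
  refine even_sum _ fun p hp => ?_
  obtain ⟨⟨b, hb, rfl⟩, hne⟩ : (∃ b ∈ P.parts, b ⊓ S = p) ∧ p ≠ ⊥ := by
    simpa [Finpartition.restrict, and_comm] using hp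
  obtain ⟨x, hx⟩ := nonempty_iff_ne_empty.2 hne
  have hbS : b ⊆ S := fun y hy =>
    hS x (mem_inter.1 hx).2 y ⟨b, hb, (mem_inter.1 hx).1, hy⟩
  rw [inf_eq_left.2 hbS]
  exact heven b hb

end Saturated

section NonCrossing

variable {N : ℕ} {P : Finpartition (univ : Finset (Fin N))}

theorem IsNonCrossing.mem_Ioo_of_sameBlock (hnc : IsNonCrossing P) {x y z w : Fin N}
    (hxy : SameBlock P x y) (hz : z ∈ Ioo x y) (hxz : ¬ SameBlock P x z)
    (hzw : SameBlock P z w) : w ∈ Ioo x y := by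
  obtain ⟨hxz', hzy⟩ := mem_Ioo.1 hz
  refine mem_Ioo.2 ⟨?_, ?_⟩
  · rcases lt_trichotomy w x with hwx | rfl | hxw
    · exact absurd ((hnc w x z y hwx hxz' hzy hzw.symm hxy).symm.trans hzw.symm) hxz
    · exact absurd hzw.symm hxz
    · exact hxw
  · rcases lt_trichotomy w y with hwy | rfl | hyw
    · exact hwy
    · exact absurd (hxy.trans hzw.symm) hxz
    · exact absurd (hnc x z y w hxz' hzy hyw hxy hzw) hxz

theorem IsNonCrossing.isSaturated_Icc (hnc : IsNonCrossing P) {B : Finset (Fin N)}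
    (hB : B ∈ P.parts) {x y : Fin N} (hx : x ∈ B) (hy : y ∈ B) (hBxy : B ⊆ Icc x y) :
    IsSaturated P (Icc x y) := by
  intro z hz w hzw
  by_cases hzB : z ∈ B
  · exact hBxy (hzw.mem_of_mem hB hzB)
  have hzxy : z ∈ Ioo x y := by
    obtain ⟨hxz, hzy⟩ := mem_Icc.1 hz
    exact mem_Ioo.2 ⟨lt_of_le_of_ne hxz (by rintro rfl; exact hzB hx),
      lt_of_le_of_ne hzy (by rintro rfl; exact hzB hy)⟩
  have hxz : ¬ SameBlock P x z := fun h => hzB (h.mem_of_mem hB hx)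
  exact Ioo_subset_Icc_self (hnc.mem_Ioo_of_sameBlock ⟨B, hB, hx, hy⟩ hzxy hxz hzw)

end NonCrossing

section Phi

variable {m : ℕ} {P : Finpartition (univ : Finset (Fin (2 * m)))}

def PhiRel (P : Finpartition (univ : Finset (Fin (2 * m)))) : Fin m → Fin m → Prop :=
  Relation.EqvGen (fun k l =>
    ∃ s t : Fin (2 * m), (s.val = 2 * k.val ∨ s.val = 2 * k.val + 1) ∧
      (t.val = 2 * l.val ∨ t.val = 2 * l.val + 1) ∧ SameBlock P s t)

theorem IsNonCrossing.phiRel_of_isSaturated_Icc (hnc : IsNonCrossing P)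
    (heven : ∀ b ∈ P.parts, Even b.card) {k l : Fin m} (hkl : k ≤ l) {x y : Fin (2 * m)}
    (hx : x.val = 2 * k.val + 1) (hy : y.val = 2 * l.val) (hsat : IsSaturated P (Icc x y)) :
    PhiRel P k l := by
  rcases hkl.eq_or_lt with rfl | hlt
  · exact .refl k
  have hB : P.part x ∈ P.parts := P.part_mem.2 (mem_univ x)
  have hxB : x ∈ P.part x := P.mem_part (mem_univ x)
  have hBxy : P.part x ⊆ Icc x y := fun z hz =>
    hsat x (left_mem_Icc.2 (Fin.le_def.2 (by omega))) z (sameBlock_iff_mem_part.2 hz)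
  obtain ⟨v, hvB, hBv⟩ : ∃ v ∈ P.part x, ∀ z ∈ P.part x, z ≤ v :=
    ⟨_, max'_mem _ ⟨x, hxB⟩, fun z hz => le_max' _ z hz⟩
  have hBxv : P.part x ⊆ Icc x v := fun z hz => mem_Icc.2 ⟨(mem_Icc.1 (hBxy hz)).1, hBv z hz⟩
  have hsat_xv : IsSaturated P (Icc x v) := hnc.isSaturated_Icc hB hxB hvB hBxv
  have hv_even := hsat_xv.even_card heven
  have hvy := (mem_Icc.1 (hBxy hvB)).2
  have hxv := hBv x hxB
  rw [Fin.card_Icc, Nat.even_iff] at hv_even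
  rw [Fin.le_def] at hvy hxv
  obtain ⟨u, hu⟩ : ∃ u : Fin m, v.val = 2 * u.val := ⟨⟨v.val / 2, by omega⟩, by dsimp only; omega⟩
  have hku : PhiRel P k u := .rel _ _ ⟨x, v, .inr hx, .inl hu, ⟨_, hB, hxB, hvB⟩⟩
  rcases (show u ≤ l from Fin.le_def.2 (by omega)).eq_or_lt with rfl | hul
  · exact hku
  have hrest : Icc x y \ Icc x v = Icc ⟨v.val + 1, by omega⟩ y := by
    ext z
    simp only [mem_sdiff, mem_Icc, Fin.le_def]
    omega
  have hsat_rest : IsSaturated P (Icc ⟨v.val + 1, by omega⟩ y) := hrest ▸ hsat.sdiff hsat_xv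
  exact .trans _ _ _ hku (hnc.phiRel_of_isSaturated_Icc heven hul.le (by dsimp only; omega) hy
    hsat_rest)
termination_by l.val - k.val
decreasing_by omega

end Phi

section LabelClass

variable {d m : ℕ} {i j : Fin d} {s u : Fin (2 * m)}

lemma elemAt_val (i : Fin d) (t : Fin (2 * m)) :
    (elemAt i t).val = t.val * d + (if t.val % 2 = 0 then i.val else d - 1 - i.val) := rfl

lemma elemAt_lt_elemAt_of_lt (i j : Fin d) (h : u < s) : elemAt i u < elemAt j s := by
  have hmul : u.val * d + d ≤ s.val * d := by
    simpa [Nat.add_mul] using Nat.mul_le_mul_right d (Fin.lt_def.1 h)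
  have hi := i.isLt
  rw [Fin.lt_def, elemAt_val, elemAt_val]
  split <;> split <;> omega

lemma elemAt_strictMono (i : Fin d) : StrictMono (elemAt (m := m) i) :=
  fun _ _ => elemAt_lt_elemAt_of_lt i i

lemma elemAt_lt_elemAt_of_even (hij : i < j) (hu : u.val % 2 = 0) : elemAt i u < elemAt j u := by
  rw [Fin.lt_def, elemAt_val, elemAt_val, if_pos hu, if_pos hu]
  exact Nat.add_lt_add_left hij _

lemma elemAt_lt_elemAt_of_odd (hij : i < j) (hu : u.val % 2 = 1) : elemAt j u < elemAt i u := by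
  have hj := j.isLt
  rw [Fin.lt_def, elemAt_val, elemAt_val, if_neg (by omega), if_neg (by omega)]
  rw [Fin.lt_def] at hij
  omega

lemma elemAt_lt_elemAt_iff_left (hij : i < j) {k : ℕ} (hs : s.val = 2 * k ∨ s.val = 2 * k + 1) :
    elemAt j s < elemAt i u ↔ 2 * k + 1 ≤ u.val := by
  constructor
  · intro h
    by_contra! hu
    rcases lt_or_eq_of_le (show u ≤ s from Fin.le_def.2 (by omega)) with hus | rfl
    · exact lt_asymm h (elemAt_lt_elemAt_of_lt i j hus)
    · exact lt_asymm h (elemAt_lt_elemAt_of_even hij (by omega))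
  · intro hu
    rcases lt_or_eq_of_le (show s ≤ u from Fin.le_def.2 (by omega)) with hsu | rfl
    · exact elemAt_lt_elemAt_of_lt j i hsu
    · exact elemAt_lt_elemAt_of_odd hij (by omega)

lemma elemAt_lt_elemAt_iff_right (hij : i < j) {l : ℕ}
    (hs : s.val = 2 * l ∨ s.val = 2 * l + 1) :
    elemAt i u < elemAt j s ↔ u.val ≤ 2 * l := by
  constructor
  · intro h
    by_contra! hu
    rcases lt_or_eq_of_le (show s ≤ u from Fin.le_def.2 (by omega)) with hsu | rfl
    · exact lt_asymm h (elemAt_lt_elemAt_of_lt j i hsu)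
    · exact lt_asymm h (elemAt_lt_elemAt_of_odd hij (by omega))
  · intro hu
    rcases lt_or_eq_of_le (show u ≤ s from Fin.le_def.2 (by omega)) with hus | rfl
    · exact elemAt_lt_elemAt_of_lt i j hus
    · exact elemAt_lt_elemAt_of_even hij (by omega)

lemma label_elemAt (i : Fin d) (t : Fin (2 * m)) : label d (elemAt i t) = i := by
  have hi := i.isLt
  have hd : 0 < d := by omega
  have hr : (if t.val % 2 = 0 then i.val else d - 1 - i.val) < d := by split <;> omega
  have hdiv : (elemAt i t).val / d = t.val := by
    rw [elemAt_val, Nat.add_comm, Nat.add_mul_div_right _ _ hd, Nat.div_eq_of_lt hr, zero_add]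
  have hmod : (elemAt i t).val % d = if t.val % 2 = 0 then i.val else d - 1 - i.val := by
    rw [elemAt_val, Nat.add_comm, Nat.add_mul_mod_self_right, Nat.mod_eq_of_lt hr]
  rw [label, hdiv, hmod]
  split_ifs <;> omega

lemma exists_elemAt_eq_of_label (x : Fin (2 * d * m)) (hx : label d x = i) :
    ∃ u : Fin (2 * m), elemAt i u = x := by
  have hd : 0 < d := i.pos
  have hxd : x.val / d < 2 * m := by
    rw [Nat.div_lt_iff_lt_mul hd]
    exact x.isLt.trans_eq (Nat.mul_right_comm 2 d m)
  refine ⟨⟨x.val / d, hxd⟩, Fin.ext ?_⟩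
  have hdecomp := Nat.div_add_mod' x.val d
  have hmod := Nat.mod_lt x.val hd
  have hi := i.isLt
  rw [label] at hx
  rw [elemAt_val]
  dsimp only
  split_ifs at hx ⊢ <;> omega

end LabelClass

section Restriction

variable {d m : ℕ} (π : Finpartition (univ : Finset (Fin (2 * d * m)))) (i : Fin d)

/-- `π|_{A_i}`, transported to `[2m]` along `elemAt i`. -/
noncomputable def restrictToLabel : Finpartition (univ : Finset (Fin (2 * m))) :=
  Finpartition.ofSetoid ((sameBlockSetoid π).comap (elemAt i))

variable {π i}

lemma sameBlock_restrictToLabel {s t : Fin (2 * m)} :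
    SameBlock (restrictToLabel π i) s t ↔ SameBlock π (elemAt i s) (elemAt i t) := by
  rw [sameBlock_iff_mem_part, restrictToLabel, Finpartition.mem_part_ofSetoid_iff_rel,
    Setoid.comap_rel]
  rfl

lemma phiRestRel_eq_phiRel : PhiRestRel π i = PhiRel (restrictToLabel π i) := by
  unfold PhiRestRel PhiRel
  simp_rw [sameBlock_restrictToLabel]

lemma IsNonCrossing.restrictToLabel (hnc : IsNonCrossing π) :
    IsNonCrossing (restrictToLabel π i) := by
  intro a b c e hab hbc hce hac hbe
  rw [sameBlock_restrictToLabel] at hac hbe ⊢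
  have hmono := elemAt_strictMono (m := m) i
  exact hnc _ _ _ _ (hmono hab) (hmono hbc) (hmono hce) hac hbe

lemma even_card_of_mem_parts_restrictToLabel (heven : ∀ b ∈ π.parts, Even b.card)
    (hlabel : ∀ x y : Fin (2 * d * m), SameBlock π x y → label d x = label d y)
    {b : Finset (Fin (2 * m))} (hb : b ∈ (restrictToLabel π i).parts) : Even b.card := by
  obtain ⟨s, hs⟩ := Finpartition.nonempty_of_mem_parts _ hb
  have himage : b.image (elemAt i) = π.part (elemAt i s) := by
    rw [← (restrictToLabel π i).part_eq_of_mem hb hs]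
    ext x
    simp only [mem_image, ← sameBlock_iff_mem_part, sameBlock_restrictToLabel]
    constructor
    · rintro ⟨t, hst, rfl⟩
      exact hst
    · intro hsx
      have hx : label d x = i := (hlabel _ _ hsx).symm.trans (label_elemAt i s)
      obtain ⟨t, rfl⟩ := exists_elemAt_eq_of_label x hx
      exact ⟨t, hsx, rfl⟩
  rw [← card_image_of_injective b (elemAt_strictMono i).injective, himage]
  exact heven _ (π.part_mem.2 (mem_univ _))

end Restriction

section Monotone

variable {d m : ℕ} {π : Finpartition (univ : Finset (Fin (2 * d * m)))} {i j : Fin d}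

theorem isSaturated_Icc_restrictToLabel (hnc : IsNonCrossing π)
    (hlabel : ∀ x y : Fin (2 * d * m), SameBlock π x y → label d x = label d y) (hij : i < j)
    {k l : Fin m} {s t : Fin (2 * m)} (hs : s.val = 2 * k.val ∨ s.val = 2 * k.val + 1)
    (ht : t.val = 2 * l.val ∨ t.val = 2 * l.val + 1)
    (hst : SameBlock π (elemAt j s) (elemAt j t)) {x y : Fin (2 * m)}
    (hx : x.val = 2 * k.val + 1) (hy : y.val = 2 * l.val) :
    IsSaturated (restrictToLabel π i) (Icc x y) := by
  have hmem : ∀ u : Fin (2 * m), u ∈ Icc x y ↔ elemAt i u ∈ Ioo (elemAt j s) (elemAt j t) := by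
    intro u
    rw [mem_Icc, mem_Ioo, elemAt_lt_elemAt_iff_left hij hs, elemAt_lt_elemAt_iff_right hij ht,
      Fin.le_def, Fin.le_def, hx, hy]
  intro u hu u' huu'
  rw [sameBlock_restrictToLabel] at huu'
  have hsu : ¬ SameBlock π (elemAt j s) (elemAt i u) := fun h => by
    have := hlabel _ _ h
    rw [label_elemAt, label_elemAt] at this
    exact hij.ne' (Fin.ext this)
  exact (hmem u').2 (hnc.mem_Ioo_of_sameBlock hst ((hmem u).1 hu) hsu huu')

theorem phiRel_restrictToLabel_of_sameBlock (hnc : IsNonCrossing π)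
    (heven : ∀ b ∈ π.parts, Even b.card)
    (hlabel : ∀ x y : Fin (2 * d * m), SameBlock π x y → label d x = label d y) (hij : i < j)
    {k l : Fin m} {s t : Fin (2 * m)} (hs : s.val = 2 * k.val ∨ s.val = 2 * k.val + 1)
    (ht : t.val = 2 * l.val ∨ t.val = 2 * l.val + 1)
    (hst : SameBlock π (elemAt j s) (elemAt j t)) :
    PhiRel (restrictToLabel π i) k l := by
  have hnc' := hnc.restrictToLabel (i := i)
  have heven' : ∀ b ∈ (restrictToLabel π i).parts, Even b.card := fun _ hb =>
    even_card_of_mem_parts_restrictToLabel heven hlabel hb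
  rcases le_total k l with hkl | hlk
  · exact hnc'.phiRel_of_isSaturated_Icc heven' hkl (x := ⟨2 * k.val + 1, by omega⟩)
      (y := ⟨2 * l.val, by omega⟩) rfl rfl
      (isSaturated_Icc_restrictToLabel hnc hlabel hij hs ht hst rfl rfl)
  · exact .symm _ _ <| hnc'.phiRel_of_isSaturated_Icc heven' hlk
      (x := ⟨2 * l.val + 1, by omega⟩) (y := ⟨2 * k.val, by omega⟩) rfl rfl
      (isSaturated_Icc_restrictToLabel hnc hlabel hij ht hs hst.symm rfl rfl)

end Monotone

theorem PhiRest_monotone_general (d m : ℕ)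
    (π : Finpartition (Finset.univ : Finset (Fin (2 * d * m))))
    (hnc : IsNonCrossing π) (heven : ∀ b ∈ π.parts, Even b.card)
    (hlabel : ∀ i j : Fin (2 * d * m), SameBlock π i j → label d i = label d j) :
    ∀ i j : Fin d, i < j → ∀ k l : Fin m, PhiRestRel π j k l → PhiRestRel π i k l := by
  intro i j hij k l hjkl
  rw [phiRestRel_eq_phiRel] at hjkl ⊢
  refine Relation.EqvGen.eqvGen_le (r' := Relation.EqvGen _) ?_ k l hjkl
  rintro k l ⟨s, t, hs, ht, hst⟩
  rw [sameBlock_restrictToLabel] at hst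
  exact phiRel_restrictToLabel_of_sameBlock hnc heven hlabel hij hs ht hst

/-- For `π ∈ NC*(d,m)` (non-crossing, even blocks, finer than the label partition
`{A₁,...,A_d}`), the map `P(π) = (Φ(π|_{A₁}),...,Φ(π|_{A_d}))` is a non-decreasing
chain: for `i < j`, the partition `Φ(π|_{A_j})` is finer than `Φ(π|_{A_i})`. -/
theorem PhiRest_monotone (d m : ℕ) (hd : 0 < d) (hm : 0 < m)
    (π : Finpartition (Finset.univ : Finset (Fin (2 * d * m))))
    (hnc : IsNonCrossing π) (heven : ∀ b ∈ π.parts, Even b.card)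
    (hlabel : ∀ i j : Fin (2 * d * m), SameBlock π i j → label d i = label d j) :
    ∀ i j : Fin d, i < j → ∀ k l : Fin m, PhiRestRel π j k l → PhiRestRel π i k l :=
  PhiRest_monotone_general d m π hnc heven hlabel
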